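/- For every pointed pair (K,L,⋆) of Kan complexes the following natural sequence is exact: … → π_{n+1}(K,L,⋆) →^{∂_*} π_n(L,⋆) →^{i_*} π_n(K,⋆) →^{p_*} π_n(K,L,⋆) →^{∂_*} … → π_1(K,L,⋆) →^{∂_*} π_0(L,⋆) →^{i_*} π_0(K,⋆), where i_* is induced by the inclusion L ↪ K, p_* is induced by the identification π_n(K,⋆) ≅ π_n(K,⋆,⋆) followed by the map of pairs (K,⋆) → (K,L), and ∂_*[x] = [d_0 x]; exactness holds in the sense of groups where the terms are groups and in the sense of pointed sets at the π_0 and π_1 terms. -/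

import Mathlib

/-- A simplicial set, given combinatorially by sets of `n`-simplices together with
face operators `d i : K_{n+1} → K_n` (`i ≤ n+1`) and degeneracy operators
`s i : K_n → K_{n+1}` (`i ≤ n`) satisfying the simplicial identities.
(The operators are indexed by natural numbers; their values at out-of-range
indices are irrelevant.) -/
structure SSetC where
  obj : ℕ → Type
  d : (n : ℕ) → ℕ → obj (n + 1) → obj n
  s : (n : ℕ) → ℕ → obj n → obj (n + 1)
  dd : ∀ (n i j : ℕ), i < j → j ≤ n + 2 → ∀ x : obj (n + 2),
      d n i (d (n + 1) j x) = d n (j - 1) (d (n + 1) i x)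
  ss : ∀ (n i j : ℕ), i ≤ j → j ≤ n → ∀ x : obj n,
      s (n + 1) i (s n j x) = s (n + 1) (j + 1) (s n i x)
  ds_lt : ∀ (n i j : ℕ), i < j → j ≤ n + 1 → ∀ x : obj (n + 1),
      d (n + 1) i (s (n + 1) j x) = s n (j - 1) (d n i x)
  ds_self : ∀ (n i : ℕ), i ≤ n → ∀ x : obj n, d n i (s n i x) = x
  ds_succ : ∀ (n i : ℕ), i ≤ n → ∀ x : obj n, d n (i + 1) (s n i x) = x
  ds_gt : ∀ (n i j : ℕ), j + 1 < i → i ≤ n + 2 → ∀ x : obj (n + 1),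
      d (n + 1) i (s (n + 1) j x) = s n j (d n (i - 1) x)

namespace SSetC

variable (K : SSetC)

/-- The boundary `∂x = (d_0 x, …, d_{m+1} x)` of an `(m+1)`-simplex. -/
def bdry {m : ℕ} (x : K.obj (m + 1)) : Fin (m + 2) → K.obj m := fun i => K.d m i x

/-- An `(m+2)`-tuple of `m`-simplices is an `m`-boundary if it is the boundary of
some `(m+1)`-simplex. -/
def IsBoundary {m : ℕ} (c : Fin (m + 2) → K.obj m) : Prop :=
  ∃ x : K.obj (m + 1), K.bdry x = c

/-- An `(m+2)`-tuple of `m`-simplices is compatible (an `m`-cycle) if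
`d_i x_j = d_{j-1} x_i` for all `i < j` (a vacuous condition for `m = 0`). -/
def Compat : ∀ {m : ℕ}, (Fin (m + 2) → K.obj m) → Prop
  | 0 => fun _ => True
  | m + 1 => fun c => ∀ i j : Fin (m + 3), (i : ℕ) < (j : ℕ) →
      K.d m i (c j) = K.d m ((j : ℕ) - 1) (c i)

/-- Compatibility of an `(m,k)`-horn: the entry at position `k` is disregarded. -/
def HornCompat : ∀ {m : ℕ}, ℕ → (Fin (m + 2) → K.obj m) → Prop
  | 0 => fun _ _ => True
  | m + 1 => fun k c => ∀ i j : Fin (m + 3), (i : ℕ) ≠ k → (j : ℕ) ≠ k → (i : ℕ) < (j : ℕ) →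
      K.d m i (c j) = K.d m ((j : ℕ) - 1) (c i)

/-- A simplicial set is a Kan complex if every horn has a filling. -/
def IsKan : Prop :=
  ∀ (m k : ℕ), k ≤ m + 1 → ∀ c : Fin (m + 2) → K.obj m, K.HornCompat k c →
    ∃ x : K.obj (m + 1), ∀ i : Fin (m + 2), (i : ℕ) ≠ k → K.d m i x = c i

/-- The cycle `(s_{n-1} d_0 x, …, s_{n-1} d_{n-1} x, x, y)` used to define homotopy
of `n`-simplices (for `n = 0` it is just `(x, y)`). -/
def homotopyTuple : ∀ {n : ℕ}, K.obj n → K.obj n → Fin (n + 2) → K.obj n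
  | 0 => fun x y => ![x, y]
  | n + 1 => fun x y i =>
      if (i : ℕ) < n + 1 then K.s n n (K.d n i x)
      else if (i : ℕ) = n + 1 then x else y

/-- Two `n`-simplices (with the same boundary) are homotopic if the corresponding
cycle is a boundary. -/
def Homotopic {n : ℕ} (x y : K.obj n) : Prop :=
  K.IsBoundary (K.homotopyTuple x y)

/-- `∂x = ∂y` (a vacuous condition for vertices). -/
def SameBdry : ∀ {n : ℕ}, K.obj n → K.obj n → Prop
  | 0 => fun _ _ => True
  | _ + 1 => fun x y => K.bdry x = K.bdry y

/-- The simplex `⋆_n` of the subcomplex generated by a base point. -/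
def basept (b : K.obj 0) : ∀ n : ℕ, K.obj n
  | 0 => b
  | n + 1 => K.s n 0 (basept b n)

lemma basept_succ (b : K.obj 0) (n : ℕ) : K.basept b (n + 1) = K.s n 0 (K.basept b n) := rfl

lemma s_basept (b : K.obj 0) : ∀ n i : ℕ, i ≤ n → K.s n i (K.basept b n) = K.basept b (n + 1) := by
  intro n
  induction n with
  | zero => intro i hi; interval_cases i; rfl
  | succ n ih =>
    intro i hi
    match i, hi with
    | 0, _ => rfl
    | (i + 1), hi =>
      have h1 : K.basept b (n + 1) = K.s n 0 (K.basept b n) := rfl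
      rw [h1, ← K.ss n 0 i (Nat.zero_le _) (by omega), ih i (by omega)]
      exact (K.basept_succ b (n + 1)).symm

lemma d_basept (b : K.obj 0) : ∀ n i : ℕ, i ≤ n + 1 → K.d n i (K.basept b (n + 1)) = K.basept b n := by
  intro n
  induction n with
  | zero =>
    intro i hi
    interval_cases i
    · exact K.ds_self 0 0 (le_refl 0) b
    · exact K.ds_succ 0 0 (le_refl 0) b
  | succ n ih =>
    intro i hi
    match i, hi with
    | 0, _ => exact K.ds_self (n + 1) 0 (Nat.zero_le _) _
    | 1, _ => exact K.ds_succ (n + 1) 0 (Nat.zero_le _) _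
    | (i + 2), hi =>
      have h1 : K.basept b (n + 1 + 1) = K.s (n + 1) 0 (K.basept b (n + 1)) := rfl
      rw [h1, K.ds_gt n (i + 2) 0 (by omega) (by omega)]
      show K.s n 0 (K.d n (i + 1) (K.basept b (n + 1))) = _
      rw [ih (i + 1) (by omega), K.s_basept b n 0 (Nat.zero_le _)]

/-- An `(m+1)`-simplex is spherical if all of its faces are the base point. -/
def IsSph (b : K.obj 0) {m : ℕ} (x : K.obj (m + 1)) : Prop :=
  ∀ i : Fin (m + 2), K.d m i x = K.basept b m

/-- Sphericality for simplices of arbitrary dimension (vacuous for vertices). -/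
def IsSph' (b : K.obj 0) : ∀ {n : ℕ}, K.obj n → Prop
  | 0 => fun _ => True
  | _ + 1 => fun x => K.IsSph b x

lemma basept_isSph (b : K.obj 0) (m : ℕ) : K.IsSph b (K.basept b (m + 1)) :=
  fun i => K.d_basept b m i (Nat.lt_succ_iff.mp i.isLt)

/-- The cycle `(⋆, …, ⋆, y, z, x)` witnessing `[x][y] = [z]` in `π_{m+1}`. -/
def mulTuple (b : K.obj 0) {m : ℕ} (x y z : K.obj (m + 1)) : Fin (m + 3) → K.obj (m + 1) :=
  fun i =>
    if (i : ℕ) < m then K.basept b (m + 1)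
    else if (i : ℕ) = m then y
    else if (i : ℕ) = m + 1 then z
    else x

/-- `z` is a product of `x` and `y` in the sense of the homotopy group `π_{m+1}`. -/
def MulWitness (b : K.obj 0) {m : ℕ} (x y z : K.obj (m + 1)) : Prop :=
  K.IsBoundary (K.mulTuple b x y z)

/-- Spherical `(m+1)`-simplices: the representatives of `π_{m+1}(K,⋆)`. -/
def Sph (b : K.obj 0) (m : ℕ) := {x : K.obj (m + 1) // K.IsSph b x}

/-- The homotopy group `π_{m+1}(K,⋆)` as a quotient set. -/
def piGrp (b : K.obj 0) (m : ℕ) := Quot (fun x y : K.Sph b m => K.Homotopic x.1 y.1)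

/-- The homotopy class of a spherical simplex. -/
def cls (b : K.obj 0) (m : ℕ) (x : K.Sph b m) : K.piGrp b m := Quot.mk _ x

/-- A binary operation on `π_{m+1}(K,⋆)` is induced by horn filling if it sends
classes of `x` and `y` to the class of any product witness `z`. -/
def MulDescends (b : K.obj 0) (m : ℕ) (mul : K.piGrp b m → K.piGrp b m → K.piGrp b m) : Prop :=
  ∀ x y z : K.Sph b m, K.MulWitness b x.1 y.1 z.1 → mul (K.cls b m x) (K.cls b m y) = K.cls b m z

/-- A Kan complex is minimal if homotopic simplices with equal boundaries are equal. -/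
def Minimal : Prop :=
  ∀ (n : ℕ) (x y : K.obj n), K.SameBdry x y → K.Homotopic x y → x = y

end SSetC
namespace SSetC

variable (K : SSetC)

/-- A subcomplex of a simplicial set: a family of subsets closed under the
face and degeneracy operators. -/
structure Subcomplex (K : SSetC) where
  mem : ∀ n, Set (K.obj n)
  d_mem : ∀ (n i : ℕ), i ≤ n + 1 → ∀ x ∈ mem (n + 1), K.d n i x ∈ mem n
  s_mem : ∀ (n i : ℕ), i ≤ n → ∀ x ∈ mem n, K.s n i x ∈ mem (n + 1)

/-- The subcomplex `L` is itself a Kan complex: every horn with entries in `L`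
has a filling lying in `L`. -/
def Subcomplex.IsKan {K : SSetC} (L : Subcomplex K) : Prop :=
  ∀ (m k : ℕ), k ≤ m + 1 → ∀ c : Fin (m + 2) → K.obj m,
    (∀ i : Fin (m + 2), (i : ℕ) ≠ k → c i ∈ L.mem m) → K.HornCompat k c →
    ∃ x : K.obj (m + 1), x ∈ L.mem (m + 1) ∧ ∀ i : Fin (m + 2), (i : ℕ) ≠ k → K.d m i x = c i

/-- A tuple of `m`-simplices lying in a subcomplex is a boundary in the subcomplex
if it is the boundary of a simplex of the subcomplex. -/
def IsBoundaryIn (L : Subcomplex K) {m : ℕ} (c : Fin (m + 2) → K.obj m) : Prop :=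
  ∃ x ∈ L.mem (m + 1), K.bdry x = c

/-- Homotopy of simplices realized inside a subcomplex. -/
def HomotopicIn (L : Subcomplex K) {n : ℕ} (x y : K.obj n) : Prop :=
  K.IsBoundaryIn L (K.homotopyTuple x y)

/-- The cycle `(h_L, s_m d_1 x, …, s_m d_m x, x, y)` used to define relative homotopy. -/
def relTuple {m : ℕ} (hL x y : K.obj (m + 1)) : Fin (m + 3) → K.obj (m + 1) :=
  fun i =>
    if (i : ℕ) = 0 then hL
    else if (i : ℕ) < m + 1 then K.s m m (K.d m i x)
    else if (i : ℕ) = m + 1 then x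
    else y

/-- Two `(m+1)`-simplices are homotopic relative to a subcomplex `L`. -/
def HomotopicRel (L : Subcomplex K) {m : ℕ} (x y : K.obj (m + 1)) : Prop :=
  (∀ i : ℕ, 1 ≤ i → i ≤ m + 1 → K.d m i x = K.d m i y) ∧
  K.d m 0 x ∈ L.mem m ∧ K.d m 0 y ∈ L.mem m ∧
  ∃ hL ∈ L.mem (m + 1), K.IsBoundary (K.relTuple hL x y)

/-- Representatives of the relative homotopy group `π_{m+1}(K,L,⋆)`:
`∂x = (l, ⋆, …, ⋆)` with `l ∈ L`. -/
def IsRelSph (L : Subcomplex K) (b : K.obj 0) {m : ℕ} (x : K.obj (m + 1)) : Prop :=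
  K.d m 0 x ∈ L.mem m ∧ ∀ i : Fin (m + 2), 1 ≤ (i : ℕ) → K.d m i x = K.basept b m

def RelSph (L : Subcomplex K) (b : K.obj 0) (m : ℕ) := {x : K.obj (m + 1) // K.IsRelSph L b x}

/-- The relative homotopy group `π_{m+1}(K,L,⋆)` as a quotient set. -/
def piRel (L : Subcomplex K) (b : K.obj 0) (m : ℕ) :=
  Quot (fun x y : K.RelSph L b m => K.HomotopicRel L x.1 y.1)

def relCls (L : Subcomplex K) (b : K.obj 0) (m : ℕ) (x : K.RelSph L b m) : K.piRel L b m :=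
  Quot.mk _ x

/-- The cycle `(h, ⋆, …, ⋆, y, z, x)` (with `h ∈ L`) witnessing `[x][y] = [z]` in
the relative homotopy group `π_{m+2}(K,L,⋆)`. -/
def relMulTuple (b : K.obj 0) {m : ℕ} (h x y z : K.obj (m + 2)) : Fin (m + 4) → K.obj (m + 2) :=
  fun i =>
    if (i : ℕ) = 0 then h
    else if (i : ℕ) < m + 1 then K.basept b (m + 2)
    else if (i : ℕ) = m + 1 then y
    else if (i : ℕ) = m + 2 then z
    else x

def RelMulWitness (L : Subcomplex K) (b : K.obj 0) {m : ℕ} (x y z : K.obj (m + 2)) : Prop :=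
  ∃ h ∈ L.mem (m + 2), K.IsBoundary (K.relMulTuple b h x y z)

def RelMulDescends (L : Subcomplex K) (b : K.obj 0) (m : ℕ)
    (mul : K.piRel L b (m + 1) → K.piRel L b (m + 1) → K.piRel L b (m + 1)) : Prop :=
  ∀ x y z : K.RelSph L b (m + 1), K.RelMulWitness L b x.1 y.1 z.1 →
    mul (K.relCls L b (m + 1) x) (K.relCls L b (m + 1) y) = K.relCls L b (m + 1) z

/-- The subcomplex generated by a base point. -/
def ptSub (b : K.obj 0) : Subcomplex K where
  mem n := {x | x = K.basept b n}
  d_mem n i hi x hx := by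
    simp only [Set.mem_setOf_eq] at *
    rw [hx]; exact K.d_basept b n i hi
  s_mem n i hi x hx := by
    simp only [Set.mem_setOf_eq] at *
    rw [hx]; exact K.s_basept b n i hi

/-- The full subcomplex. -/
def topSub : Subcomplex K where
  mem _ := Set.univ
  d_mem _ _ _ _ _ := trivial
  s_mem _ _ _ _ _ := trivial

/-- The empty subcomplex. -/
def botSub : Subcomplex K where
  mem _ := ∅
  d_mem _ _ _ _ h := h.elim
  s_mem _ _ _ _ h := h.elim

/-- A simplicial map between simplicial sets. -/
structure SMap (K L : SSetC) where
  app : ∀ n, K.obj n → L.obj n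
  comm_d : ∀ (n i : ℕ), i ≤ n + 1 → ∀ x : K.obj (n + 1), app n (K.d n i x) = L.d n i (app (n + 1) x)
  comm_s : ∀ (n i : ℕ), i ≤ n → ∀ x : K.obj n, app (n + 1) (K.s n i x) = L.s n i (app n x)

/-- The identity simplicial map. -/
def SMap.idMap (K : SSetC) : SMap K K :=
  ⟨fun _ x => x, fun _ _ _ _ => rfl, fun _ _ _ _ => rfl⟩

/-- Composition of simplicial maps. -/
def SMap.comp {K L M : SSetC} (f : SMap K L) (g : SMap L M) : SMap K M where
  app n x := g.app n (f.app n x)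
  comm_d n i hi x := by (try dsimp only); rw [f.comm_d n i hi, g.comm_d n i hi]
  comm_s n i hi x := by (try dsimp only); rw [f.comm_s n i hi, g.comm_s n i hi]

lemma SMap.basept_app {K L : SSetC} (f : SMap K L) (b : K.obj 0) :
    ∀ n, f.app n (K.basept b n) = L.basept (f.app 0 b) n := by
  intro n
  induction n with
  | zero => rfl
  | succ n ih =>
    have h1 : K.basept b (n + 1) = K.s n 0 (K.basept b n) := rfl
    rw [h1, f.comm_s n 0 (Nat.zero_le _), ih]
    rfl

/-- The product of two simplicial sets. -/
def prodSSet (K L : SSetC) : SSetC where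
  obj n := K.obj n × L.obj n
  d n i x := (K.d n i x.1, L.d n i x.2)
  s n i x := (K.s n i x.1, L.s n i x.2)
  dd n i j h1 h2 x := Prod.ext (K.dd n i j h1 h2 x.1) (L.dd n i j h1 h2 x.2)
  ss n i j h1 h2 x := Prod.ext (K.ss n i j h1 h2 x.1) (L.ss n i j h1 h2 x.2)
  ds_lt n i j h1 h2 x := Prod.ext (K.ds_lt n i j h1 h2 x.1) (L.ds_lt n i j h1 h2 x.2)
  ds_self n i h x := Prod.ext (K.ds_self n i h x.1) (L.ds_self n i h x.2)
  ds_succ n i h x := Prod.ext (K.ds_succ n i h x.1) (L.ds_succ n i h x.2)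
  ds_gt n i j h1 h2 x := Prod.ext (K.ds_gt n i j h1 h2 x.1) (L.ds_gt n i j h1 h2 x.2)

/-- The product of a family of simplicial sets. -/
def piSSet {I : Type} (F : I → SSetC) : SSetC where
  obj n := ∀ i, (F i).obj n
  d n j x := fun i => (F i).d n j (x i)
  s n j x := fun i => (F i).s n j (x i)
  dd n i j h1 h2 x := funext fun a => (F a).dd n i j h1 h2 (x a)
  ss n i j h1 h2 x := funext fun a => (F a).ss n i j h1 h2 (x a)
  ds_lt n i j h1 h2 x := funext fun a => (F a).ds_lt n i j h1 h2 (x a)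
  ds_self n i h x := funext fun a => (F a).ds_self n i h (x a)
  ds_succ n i h x := funext fun a => (F a).ds_succ n i h (x a)
  ds_gt n i j h1 h2 x := funext fun a => (F a).ds_gt n i j h1 h2 (x a)

/-- The coproduct (disjoint union) of a family of simplicial sets. -/
def sigmaSSet {I : Type} (F : I → SSetC) : SSetC where
  obj n := Σ i, (F i).obj n
  d n j x := ⟨x.1, (F x.1).d n j x.2⟩
  s n j x := ⟨x.1, (F x.1).s n j x.2⟩
  dd n i j h1 h2 x := congrArg (Sigma.mk x.1) ((F x.1).dd n i j h1 h2 x.2)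
  ss n i j h1 h2 x := congrArg (Sigma.mk x.1) ((F x.1).ss n i j h1 h2 x.2)
  ds_lt n i j h1 h2 x := congrArg (Sigma.mk x.1) ((F x.1).ds_lt n i j h1 h2 x.2)
  ds_self n i h x := congrArg (Sigma.mk x.1) ((F x.1).ds_self n i h x.2)
  ds_succ n i h x := congrArg (Sigma.mk x.1) ((F x.1).ds_succ n i h x.2)
  ds_gt n i j h1 h2 x := congrArg (Sigma.mk x.1) ((F x.1).ds_gt n i j h1 h2 x.2)

/-- The one-point simplicial set. -/
def ptSSet : SSetC where
  obj _ := PUnit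
  d _ _ _ := PUnit.unit
  s _ _ _ := PUnit.unit
  dd _ _ _ _ _ _ := rfl
  ss _ _ _ _ _ _ := rfl
  ds_lt _ _ _ _ _ _ := rfl
  ds_self _ _ _ _ := rfl
  ds_succ _ _ _ _ := rfl
  ds_gt _ _ _ _ _ _ := rfl

/-- The standard `1`-simplex `Δ¹`: an `n`-simplex is a monotone map `[n] → [1]`,
encoded by the number `k ∈ {0, …, n+1}` of vertices sent to `0`. -/
def deltaOne : SSetC where
  obj n := Fin (n + 2)
  d n i k := ⟨if i < (k : ℕ) then (k : ℕ) - 1 else min (k : ℕ) (n + 1), by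
    have := k.isLt; split_ifs <;> omega⟩
  s n i k := ⟨if i < (k : ℕ) then (k : ℕ) + 1 else (k : ℕ), by
    have := k.isLt; split_ifs <;> omega⟩
  dd := by
    intro n i j h1 h2 x
    apply Fin.ext
    have := x.isLt
    simp only []
    split_ifs <;> omega
  ss := by
    intro n i j h1 h2 x
    apply Fin.ext
    have := x.isLt
    simp only []
    split_ifs <;> omega
  ds_lt := by
    intro n i j h1 h2 x
    apply Fin.ext
    have := x.isLt
    simp only []
    split_ifs <;> omega
  ds_self := by
    intro n i h x
    apply Fin.ext
    have := x.isLt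
    simp only []
    split_ifs <;> omega
  ds_succ := by
    intro n i h x
    apply Fin.ext
    have := x.isLt
    simp only []
    split_ifs <;> omega
  ds_gt := by
    intro n i j h1 h2 x
    apply Fin.ext
    have := x.isLt
    simp only []
    split_ifs <;> omega

/-- The `0`-end of `Δ¹` in dimension `n` (all vertices sent to `0`). -/
def vertexZero (n : ℕ) : Fin (n + 2) := ⟨n + 1, by omega⟩

/-- The `1`-end of `Δ¹` in dimension `n` (all vertices sent to `1`). -/
def vertexOne (n : ℕ) : Fin (n + 2) := ⟨0, by omega⟩

end SSetC

/-!
A boundary whose only nontrivial face is `a` can be moved between positions `p` and `p + 1` by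
filling a horn of `(⋆, …, ⋆, v, s_p a, v', ⋆, …, ⋆)`. Hence a null-homotopy of a spherical `x`,
with boundary `(⋆, …, ⋆, x, ⋆)`, amounts to a simplex with boundary `(x, ⋆, …, ⋆)`, i.e. a
relative sphere `w` with `∂_*[w] = [x]`: this is exactness at `π_n(L)`. At `π_n(K, L)`, a simplex
`h ∈ L` with boundary `(⋆, …, ⋆, d₀ w)` and `w` span the horn `(h, ⋆, …, ⋆, ?, w)`, whose filler
is a homotopy relative to `L` from a spherical `x` to `w`, and conversely. At `π_n(K)`, a
relative null-homotopy `u` of `x` with `L`-face `h` and a simplex `V ∈ L` with boundary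
`(h, ⋆, …, ⋆, l, ⋆)` fit into the horn `(s h, ⋆, …, ⋆, Z, V, u)`; filling it at `Z` or at `u`
turns a homotopy `Z : l ∼ x` into `u` and back.

Each filling is bookkept by the table `F j i` of the faces of the faces of the filler: when it
satisfies the cycle condition and all its rows but one are realized, so is the last one.
-/

namespace SSetC

variable {K : SSetC} {b : K.obj 0}

lemma Subcomplex.basept_mem {L : Subcomplex K} (hb : b ∈ L.mem 0) : ∀ n, K.basept b n ∈ L.mem n
  | 0 => hb
  | n + 1 => L.s_mem n 0 n.zero_le _ (basept_mem hb n)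

lemma topSub_isKan (hK : K.IsKan) : K.topSub.IsKan := by
  intro m k hk c _ hc
  obtain ⟨x, hx⟩ := hK m k hk c hc
  exact ⟨x, Set.mem_univ x, hx⟩

lemma isSph_iff {m : ℕ} {x : K.obj (m + 1)} :
    K.IsSph b x ↔ ∀ i ≤ m + 1, K.d m i x = K.basept b m :=
  ⟨fun hx i hi => hx ⟨i, by omega⟩, fun hx i => hx i (by omega)⟩

lemma isSph'_d_zero {m : ℕ} {w : K.obj (m + 1)}
    (hw : ∀ i : Fin (m + 2), 1 ≤ (i : ℕ) → K.d m i w = K.basept b m) :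
    K.IsSph' b (K.d m 0 w) := by
  cases m with
  | zero => trivial
  | succ m =>
    intro i
    have h := K.dd m 0 (i + 1) (by omega) (by omega) w
    rw [Nat.add_sub_cancel] at h
    rw [← h, hw ⟨i + 1, by omega⟩ (Nat.le_add_left 1 _), K.d_basept b m 0 (by omega)]

lemma basept_isSph' (b : K.obj 0) : ∀ n, K.IsSph' b (K.basept b n)
  | 0 => trivial
  | n + 1 => K.basept_isSph b n

lemma isRelSph_basept (L : Subcomplex K) (hb : b ∈ L.mem 0) (m : ℕ) :
    K.IsRelSph L b (K.basept b (m + 1)) :=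
  ⟨by rw [K.d_basept b m 0 (by omega)]; exact L.basept_mem hb m,
    fun i _ => K.d_basept b m i (by omega)⟩

def HasBoundaryIn (M : Subcomplex K) {m : ℕ} (f : ℕ → K.obj m) : Prop :=
  ∃ v ∈ M.mem (m + 1), ∀ i ≤ m + 1, K.d m i v = f i

lemma HasBoundaryIn.topSub {M : Subcomplex K} {m : ℕ} {f : ℕ → K.obj m}
    (h : HasBoundaryIn M f) : HasBoundaryIn K.topSub f :=
  let ⟨v, _, hv⟩ := h; ⟨v, Set.mem_univ v, hv⟩

lemma isBoundaryIn_iff {M : Subcomplex K} {m : ℕ} {t : Fin (m + 2) → K.obj m}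
    {f : ℕ → K.obj m} (htf : ∀ i : Fin (m + 2), t i = f i) :
    K.IsBoundaryIn M t ↔ HasBoundaryIn M f := by
  refine ⟨fun ⟨v, hvM, hv⟩ => ⟨v, hvM, fun i hi => ?_⟩, fun ⟨v, hvM, hv⟩ => ⟨v, hvM, ?_⟩⟩
  · rw [← htf ⟨i, by omega⟩, ← hv]; rfl
  · funext i; rw [htf, ← hv i (by omega)]; rfl

/-- `F j i` stands for the `i`-th face of the `j`-th face of an `(m+2)`-simplex. -/
def IsCycleTable {m : ℕ} (F : ℕ → ℕ → K.obj m) : Prop :=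
  ∀ i j, i < j → j ≤ m + 2 → F j i = F i (j - 1)

lemma d_d_eq_of_isCycleTable {m k : ℕ} {F : ℕ → ℕ → K.obj m} (hF : IsCycleTable F)
    (hk : k ≤ m + 2) {u : K.obj (m + 2)}
    (hu : ∀ j ≤ m + 2, j ≠ k → ∀ i ≤ m + 1, K.d m i (K.d (m + 1) j u) = F j i)
    (i : ℕ) (hi : i ≤ m + 1) : K.d m i (K.d (m + 1) k u) = F k i := by
  rcases lt_or_ge i k with h | h
  · rw [K.dd m i k h hk, hu i (by omega) (by omega) (k - 1) (by omega), hF i k h hk]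
  · have hdd := K.dd m k (i + 1) (by omega) (by omega) u
    rw [Nat.add_sub_cancel] at hdd
    rw [← hdd, hu (i + 1) (by omega) (by omega) k (by omega),
      hF k (i + 1) (by omega) (by omega), Nat.add_sub_cancel]

lemma Subcomplex.IsKan.exists_of_isCycleTable {M : Subcomplex K} (hM : M.IsKan)
    {m k : ℕ} (hk : k ≤ m + 2) {F : ℕ → ℕ → K.obj m} (hF : IsCycleTable F)
    (c : ℕ → K.obj (m + 1))
    (hc : ∀ j ≤ m + 2, j ≠ k → c j ∈ M.mem (m + 1) ∧ ∀ i ≤ m + 1, K.d m i (c j) = F j i) :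
    ∃ u ∈ M.mem (m + 2), (∀ j ≤ m + 2, j ≠ k → K.d (m + 1) j u = c j) ∧
      ∀ i ≤ m + 1, K.d m i (K.d (m + 1) k u) = F k i := by
  obtain ⟨u, huM, hu⟩ := hM (m + 1) k hk (fun j : Fin (m + 3) => c j)
    (fun j hj => (hc j (by omega) hj).1) (by
      intro i j hi hj hij
      rw [(hc j (by omega) hj).2 i (by omega), (hc i (by omega) hi).2 (j - 1) (by omega),
        hF i j hij (by omega)])
  have hu' : ∀ j ≤ m + 2, j ≠ k → K.d (m + 1) j u = c j := fun j hj hjk => hu ⟨j, by omega⟩ hjk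
  refine ⟨u, huM, hu', d_d_eq_of_isCycleTable hF hk fun j hj hjk i hi => ?_⟩
  rw [hu' j hj hjk, (hc j hj hjk).2 i hi]

lemma Subcomplex.IsKan.hasBoundaryIn_of_isCycleTable {M : Subcomplex K} (hM : M.IsKan)
    {m k : ℕ} (hk : k ≤ m + 2) {F : ℕ → ℕ → K.obj m} (hF : IsCycleTable F)
    (c : ℕ → K.obj (m + 1))
    (hc : ∀ j ≤ m + 2, j ≠ k → c j ∈ M.mem (m + 1) ∧ ∀ i ≤ m + 1, K.d m i (c j) = F j i) :
    HasBoundaryIn M (F k) :=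
  let ⟨u, huM, _, hu⟩ := hM.exists_of_isCycleTable hk hF c hc
  ⟨K.d (m + 1) k u, M.d_mem (m + 1) k hk u huM, hu⟩

def singleFaces (b : K.obj 0) {n : ℕ} (p : ℕ) (a : K.obj n) : ℕ → K.obj n :=
  fun i => if i = p then a else K.basept b n

def pairFaces (b : K.obj 0) {n : ℕ} (p : ℕ) (a c : K.obj n) : ℕ → K.obj n :=
  fun i => if i = p then a else if i = p + 1 then c else K.basept b n

lemma pairFaces_basept {n : ℕ} (p : ℕ) (a : K.obj n) :
    pairFaces b p a (K.basept b n) = singleFaces b p a := by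
  funext i; unfold pairFaces singleFaces; split_ifs <;> rfl

lemma d_s_eq_pairFaces {n : ℕ} {a : K.obj n} (ha : K.IsSph' b a) {p : ℕ} (hp : p ≤ n)
    {i : ℕ} (hi : i ≤ n + 1) : K.d n i (K.s n p a) = pairFaces b p a a i := by
  unfold pairFaces
  split_ifs with h₀ h₁
  · subst h₀; exact K.ds_self n i hp a
  · subst h₁; exact K.ds_succ n p hp a
  · cases n with
    | zero => omega
    | succ n =>
      rcases lt_or_gt_of_ne h₀ with h | h
      · rw [K.ds_lt n i p h (by omega), ha ⟨i, by omega⟩, K.s_basept b n _ (by omega)]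
      · rw [K.ds_gt n i p (by omega) hi, ha ⟨i - 1, by omega⟩, K.s_basept b n p (by omega)]

lemma hasBoundaryIn_pairFaces_self (M : Subcomplex K) {n : ℕ} {a : K.obj n}
    (ha : K.IsSph' b a) (haM : a ∈ M.mem n) {p : ℕ} (hp : p ≤ n) :
    HasBoundaryIn M (pairFaces b p a a) :=
  ⟨K.s n p a, M.s_mem n p hp a haM, fun _ hi => d_s_eq_pairFaces ha hp hi⟩

lemma HasBoundaryIn.euclidean {M : Subcomplex K} (hM : M.IsKan) (hb : b ∈ M.mem 0)
    {n : ℕ} {a e c : K.obj n} (hae : HasBoundaryIn M (pairFaces b n a e))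
    (hac : HasBoundaryIn M (pairFaces b n a c)) : HasBoundaryIn M (pairFaces b n e c) := by
  obtain ⟨v, hvM, hv⟩ := hae
  obtain ⟨v', hv'M, hv'⟩ := hac
  let F : ℕ → ℕ → K.obj n := fun j i =>
    if j = n then pairFaces b n a e i else if j = n + 1 then pairFaces b n a c i
    else if j = n + 2 then pairFaces b n e c i else K.basept b n
  have hF : IsCycleTable F := by
    intro i j hij hj
    simp only [F, pairFaces]
    split_ifs <;> first | rfl | omega
  have := hM.hasBoundaryIn_of_isCycleTable (k := n + 2) le_rfl hF
    (fun j => if j = n then v else if j = n + 1 then v' else K.basept b (n + 1)) ?_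
  · simpa [F] using this
  intro j _ hj
  simp only [F]
  split_ifs
  exacts [⟨hvM, hv⟩, ⟨hv'M, hv'⟩, ⟨M.basept_mem hb _, fun i hi => K.d_basept b n i hi⟩]

lemma HasBoundaryIn.symm {M : Subcomplex K} (hM : M.IsKan) (hb : b ∈ M.mem 0)
    {n : ℕ} {a e : K.obj n} (ha : K.IsSph' b a) (haM : a ∈ M.mem n)
    (hae : HasBoundaryIn M (pairFaces b n a e)) : HasBoundaryIn M (pairFaces b n e a) :=
  hae.euclidean hM hb (hasBoundaryIn_pairFaces_self M ha haM le_rfl)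

lemma hasBoundaryIn_singleFaces_succ_iff {M : Subcomplex K} (hM : M.IsKan) (hb : b ∈ M.mem 0)
    {n : ℕ} {a : K.obj n} (ha : K.IsSph' b a) (haM : a ∈ M.mem n) {p : ℕ} (hp : p ≤ n) :
    HasBoundaryIn M (singleFaces b (p + 1) a) ↔ HasBoundaryIn M (singleFaces b p a) := by
  let F : ℕ → ℕ → K.obj n := fun j i =>
    if j = p then singleFaces b p a i else if j = p + 1 then pairFaces b p a a i
    else if j = p + 2 then singleFaces b (p + 1) a i else K.basept b n
  have hF : IsCycleTable F := by
    intro i j hij hj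
    simp only [F, singleFaces, pairFaces]
    split_ifs <;> first | rfl | omega
  have hs : K.s n p a ∈ M.mem (n + 1) ∧ ∀ i ≤ n + 1, K.d n i (K.s n p a) = F (p + 1) i :=
    ⟨M.s_mem n p hp a haM, fun i hi => by simpa [F] using d_s_eq_pairFaces ha hp hi⟩
  have hbasept : K.basept b (n + 1) ∈ M.mem (n + 1) ∧
      ∀ j ≠ p, j ≠ p + 1 → j ≠ p + 2 → ∀ i ≤ n + 1, K.d n i (K.basept b (n + 1)) = F j i :=
    ⟨M.basept_mem hb _, fun j h₀ h₁ h₂ i hi => by simp [F, h₀, h₁, h₂, K.d_basept b n i hi]⟩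
  constructor
  · rintro ⟨v, hvM, hv⟩
    have := hM.hasBoundaryIn_of_isCycleTable (k := p) (by omega) hF
      (fun j => if j = p + 1 then K.s n p a else if j = p + 2 then v else K.basept b (n + 1)) ?_
    · simpa [F] using this
    intro j _ hjp
    split_ifs with h₁ h₂
    · subst h₁; exact hs
    · subst h₂; exact ⟨hvM, fun i hi => by simp [F, hv i hi]⟩
    · exact ⟨hbasept.1, hbasept.2 j hjp h₁ h₂⟩
  · rintro ⟨v, hvM, hv⟩
    have := hM.hasBoundaryIn_of_isCycleTable (k := p + 2) (by omega) hF
      (fun j => if j = p then v else if j = p + 1 then K.s n p a else K.basept b (n + 1)) ?_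
    · simpa [F] using this
    intro j _ hjp
    split_ifs with h₀ h₁
    · subst h₀; exact ⟨hvM, fun i hi => by simp [F, hv i hi]⟩
    · subst h₁; exact hs
    · exact ⟨hbasept.1, hbasept.2 j h₀ h₁ hjp⟩

lemma hasBoundaryIn_singleFaces_iff_zero {M : Subcomplex K} (hM : M.IsKan)
    (hb : b ∈ M.mem 0) {n : ℕ} {a : K.obj n} (ha : K.IsSph' b a) (haM : a ∈ M.mem n) :
    ∀ p ≤ n + 1, HasBoundaryIn M (singleFaces b p a) ↔ HasBoundaryIn M (singleFaces b 0 a)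
  | 0, _ => Iff.rfl
  | p + 1, hp => (hasBoundaryIn_singleFaces_succ_iff hM hb ha haM (by omega)).trans
      (hasBoundaryIn_singleFaces_iff_zero hM hb ha haM p (by omega))

lemma homotopicIn_iff {M : Subcomplex K} {n : ℕ} {a c : K.obj n} (ha : K.IsSph' b a) :
    K.HomotopicIn M a c ↔ HasBoundaryIn M (pairFaces b n a c) := by
  refine isBoundaryIn_iff fun i => ?_
  cases n with
  | zero => fin_cases i <;> rfl
  | succ n =>
    have hi := i.isLt
    simp only [homotopyTuple, pairFaces]
    split_ifs <;> first | rfl | omega | rw [ha ⟨i, by omega⟩, K.s_basept b n n le_rfl]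

lemma isBoundary_iff_isBoundaryIn_topSub {m : ℕ} {t : Fin (m + 2) → K.obj m} :
    K.IsBoundary t ↔ K.IsBoundaryIn K.topSub t := by
  simp [IsBoundary, IsBoundaryIn, topSub]

lemma homotopic_iff_homotopicIn_topSub {n : ℕ} {x y : K.obj n} :
    K.Homotopic x y ↔ K.HomotopicIn K.topSub x y :=
  isBoundary_iff_isBoundaryIn_topSub

def relFaces (b : K.obj 0) {m : ℕ} (h x y : K.obj (m + 1)) : ℕ → K.obj (m + 1) :=
  fun i => if i = 0 then h else if i = m + 1 then x else if i = m + 2 then y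
    else K.basept b (m + 1)

lemma homotopicRel_iff {L : Subcomplex K} (hb : b ∈ L.mem 0) {m : ℕ} {x y : K.obj (m + 1)}
    (hx : K.IsSph b x) (hy : K.IsRelSph L b y) :
    K.HomotopicRel L x y ↔ ∃ h ∈ L.mem (m + 1), HasBoundaryIn K.topSub (relFaces b h x y) := by
  have hrel : ∀ h, K.IsBoundary (K.relTuple h x y) ↔
      HasBoundaryIn K.topSub (relFaces b h x y) := fun h => by
    refine isBoundary_iff_isBoundaryIn_topSub.trans (isBoundaryIn_iff fun i => ?_)
    have hi := i.isLt
    simp only [relTuple, relFaces]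
    split_ifs <;> first | rfl | omega | rw [hx ⟨i, by omega⟩, K.s_basept b m m le_rfl]
  refine ⟨fun ⟨_, _, _, h, hL, hu⟩ => ⟨h, hL, (hrel h).1 hu⟩,
    fun ⟨h, hL, hu⟩ => ⟨fun i h₁ h₂ => ?_, ?_, hy.1, h, hL, (hrel h).2 hu⟩⟩
  · rw [hx ⟨i, by omega⟩, hy.2 ⟨i, by omega⟩ h₁]
  · rw [isSph_iff.1 hx 0 (by omega)]; exact L.basept_mem hb m

lemma Subcomplex.IsKan.exists_of_isSph {M : Subcomplex K} (hM : M.IsKan) {m k : ℕ}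
    (hk : k ≤ m + 2) (c : ℕ → K.obj (m + 1))
    (hc : ∀ j ≤ m + 2, j ≠ k → c j ∈ M.mem (m + 1) ∧ K.IsSph b (c j)) :
    ∃ u ∈ M.mem (m + 2), (∀ j ≤ m + 2, j ≠ k → K.d (m + 1) j u = c j) ∧
      K.IsSph b (K.d (m + 1) k u) := by
  obtain ⟨u, huM, hu, huk⟩ := hM.exists_of_isCycleTable hk
    (F := fun _ _ => K.basept b m) (fun _ _ _ _ => rfl) c
    fun j hj hjk => ⟨(hc j hj hjk).1, isSph_iff.1 (hc j hj hjk).2⟩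
  exact ⟨u, huM, hu, isSph_iff.2 huk⟩

lemma isSph_d_of_isSph {m k : ℕ} (hk : k ≤ m + 2) {u : K.obj (m + 2)}
    (hu : ∀ j ≤ m + 2, j ≠ k → K.IsSph b (K.d (m + 1) j u)) : K.IsSph b (K.d (m + 1) k u) :=
  isSph_iff.2 <| d_d_eq_of_isCycleTable (F := fun _ _ => K.basept b m) (fun _ _ _ _ => rfl) hk
    fun j hj hjk => isSph_iff.1 (hu j hj hjk)

lemma IsRelSph.d_eq_singleFaces {L : Subcomplex K} {m : ℕ} {w : K.obj (m + 1)}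
    (hw : K.IsRelSph L b w) {i : ℕ} (hi : i ≤ m + 1) :
    K.d m i w = singleFaces b 0 (K.d m 0 w) i := by
  unfold singleFaces
  split_ifs with h
  · rw [h]
  · exact hw.2 ⟨i, by omega⟩ (Nat.pos_of_ne_zero h)

lemma hasBoundaryIn_pairFaces_basept_d_zero_iff (hK : K.IsKan) {L : Subcomplex K}
    {m : ℕ} {w : K.obj (m + 1)} (hw : K.IsRelSph L b w) :
    HasBoundaryIn L (pairFaces b m (K.basept b m) (K.d m 0 w)) ↔
      ∃ x, K.IsSph b x ∧ ∃ h ∈ L.mem (m + 1), HasBoundaryIn K.topSub (relFaces b h x w) := by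
  let F : ℕ → ℕ → K.obj m := fun j i =>
    if j = 0 then pairFaces b m (K.basept b m) (K.d m 0 w) i
    else if j = m + 2 then singleFaces b 0 (K.d m 0 w) i else K.basept b m
  have hF : IsCycleTable F := by
    intro i j hij hj
    simp only [F, singleFaces, pairFaces]
    split_ifs <;> first | rfl | omega
  constructor
  · rintro ⟨h, hhL, hh⟩
    have hc : ∀ j ≤ m + 2, j ≠ m + 1 → relFaces b h (K.basept b (m + 1)) w j ∈ K.topSub.mem _ ∧
        ∀ i ≤ m + 1, K.d m i (relFaces b h (K.basept b (m + 1)) w j) = F j i := by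
      refine fun j _ _ => ⟨trivial, fun i hi => ?_⟩
      simp only [F, relFaces]
      split_ifs with h₀
      · subst h₀; exact hh i hi
      · exact hw.d_eq_singleFaces hi
      · exact K.d_basept b m i hi
    obtain ⟨u, -, hu, hx⟩ :=
      (topSub_isKan hK).exists_of_isCycleTable (k := m + 1) (by omega) hF _ hc
    refine ⟨K.d (m + 1) (m + 1) u, isSph_iff.2 fun i hi => by simpa [F] using hx i hi,
      h, hhL, u, trivial, fun j hj => ?_⟩
    by_cases hjm : j = m + 1
    · simp [hjm, relFaces]
    · rw [hu j hj hjm]; simp [relFaces, hjm]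
  · rintro ⟨x, hx, h, hhL, u, -, hu⟩
    refine ⟨h, hhL, fun i hi => ?_⟩
    have hu0 : K.d (m + 1) 0 u = h := hu 0 (by omega)
    rw [← hu0]
    refine d_d_eq_of_isCycleTable hF (by omega) (fun j hj hj0 i hi => ?_) i hi
    rw [hu j hj]
    simp only [F, relFaces]
    split_ifs <;> first
      | omega
      | exact K.d_basept b m i hi
      | exact hw.d_eq_singleFaces hi
      | exact isSph_iff.1 hx i hi

lemma hasBoundaryIn_pairFaces_iff_relFaces (hK : K.IsKan) {m : ℕ} {h l x : K.obj (m + 1)}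
    (hh : K.IsSph b h) (hV : HasBoundaryIn K.topSub (relFaces b h l (K.basept b (m + 1)))) :
    HasBoundaryIn K.topSub (pairFaces b (m + 1) l x) ↔
      HasBoundaryIn K.topSub (relFaces b h x (K.basept b (m + 1))) := by
  obtain ⟨V, -, hV⟩ := hV
  let F : ℕ → ℕ → K.obj (m + 1) := fun j i =>
    if j = 0 then pairFaces b (m + 1) h h i
    else if j = m + 1 then pairFaces b (m + 1) l x i
    else if j = m + 2 then relFaces b h l (K.basept b (m + 1)) i
    else if j = m + 3 then relFaces b h x (K.basept b (m + 1)) i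
    else K.basept b (m + 1)
  have hF : IsCycleTable F := by
    intro i j hij hj
    simp only [F]
    split_ifs <;> (try omega) <;> simp only [pairFaces, relFaces] <;> split_ifs <;>
      first | rfl | omega
  have hs : ∀ i ≤ m + 2, K.d (m + 1) i (K.s (m + 1) (m + 1) h) = F 0 i :=
    fun i hi => d_s_eq_pairFaces (n := m + 1) hh le_rfl hi
  have hbasept : ∀ j, j ≠ 0 → j ≠ m + 1 → j ≠ m + 2 → j ≠ m + 3 →
      ∀ i ≤ m + 2, K.d (m + 1) i (K.basept b (m + 2)) = F j i :=
    fun j h₀ h₁ h₂ h₃ i hi => by simp [F, h₀, h₁, h₂, h₃, K.d_basept b (m + 1) i hi]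
  have hVF : ∀ i ≤ m + 2, K.d (m + 1) i V = F (m + 2) i := fun i hi => by simp [F, hV i hi]
  constructor
  · rintro ⟨Z, -, hZ⟩
    have hZF : ∀ i ≤ m + 2, K.d (m + 1) i Z = F (m + 1) i := fun i hi => by simp [F, hZ i hi]
    have := (topSub_isKan hK).hasBoundaryIn_of_isCycleTable (k := m + 3) le_rfl hF
      (fun j => if j = 0 then K.s (m + 1) (m + 1) h else if j = m + 1 then Z
        else if j = m + 2 then V else K.basept b (m + 2)) fun j _ hj => ⟨trivial, ?_⟩
    · simpa [F] using this
    split_ifs with h₀ h₁ h₂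
    · subst h₀; exact hs
    · subst h₁; exact hZF
    · subst h₂; exact hVF
    · exact hbasept j h₀ h₁ h₂ hj
  · rintro ⟨u, -, hu⟩
    have huF : ∀ i ≤ m + 2, K.d (m + 1) i u = F (m + 3) i := fun i hi => by simp [F, hu i hi]
    have := (topSub_isKan hK).hasBoundaryIn_of_isCycleTable (k := m + 1) (by omega) hF
      (fun j => if j = 0 then K.s (m + 1) (m + 1) h else if j = m + 2 then V
        else if j = m + 3 then u else K.basept b (m + 2)) fun j _ hj => ⟨trivial, ?_⟩
    · simpa [F] using this
    split_ifs with h₀ h₂ h₃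
    · subst h₀; exact hs
    · subst h₂; exact hVF
    · subst h₃; exact huF
    · exact hbasept j h₀ hj h₂ h₃

theorem homotopicIn_d_zero_basept_iff (hK : K.IsKan) {L : Subcomplex K} (hL : L.IsKan)
    (hb : b ∈ L.mem 0) {m : ℕ} {w : K.obj (m + 1)} (hw : K.IsRelSph L b w) :
    K.HomotopicIn L (K.d m 0 w) (K.basept b m) ↔ ∃ x, K.IsSph b x ∧ K.HomotopicRel L x w := by
  have hl := isSph'_d_zero hw.2
  rw [homotopicIn_iff hl]
  refine ⟨fun h => ?_, fun h => ?_⟩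
  · obtain ⟨x, hx, hrel⟩ := (hasBoundaryIn_pairFaces_basept_d_zero_iff hK hw).1
      (h.symm hL hb hl hw.1)
    exact ⟨x, hx, (homotopicRel_iff hb hx hw).2 hrel⟩
  · obtain ⟨x, hx, hrel⟩ := h
    exact ((hasBoundaryIn_pairFaces_basept_d_zero_iff hK hw).2
      ⟨x, hx, (homotopicRel_iff hb hx hw).1 hrel⟩).symm hL hb (basept_isSph' b m)
        (L.basept_mem hb m)

theorem homotopic_basept_iff (hK : K.IsKan) {L : Subcomplex K} {n : ℕ}
    {x : K.obj n} (hxL : x ∈ L.mem n) (hx : K.IsSph' b x) :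
    K.Homotopic x (K.basept b n) ↔
      ∃ w, K.IsRelSph L b w ∧ K.HomotopicIn L (K.d n 0 w) x := by
  have hT := topSub_isKan hK
  have hbT : b ∈ K.topSub.mem 0 := Set.mem_univ b
  rw [homotopic_iff_homotopicIn_topSub, homotopicIn_iff hx, pairFaces_basept,
    hasBoundaryIn_singleFaces_iff_zero hT hbT hx (Set.mem_univ x) n (by omega)]
  constructor
  · rintro ⟨w, -, hw⟩
    have hw0 : K.d n 0 w = x := hw 0 (by omega)
    refine ⟨w, ⟨hw0 ▸ hxL, fun i hi => ?_⟩, ?_⟩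
    · rw [hw i (by omega), singleFaces, if_neg (by omega)]
    · rw [hw0, homotopicIn_iff hx]
      exact hasBoundaryIn_pairFaces_self L hx hxL le_rfl
  · rintro ⟨w, hw, hlx⟩
    have hl := isSph'_d_zero hw.2
    have hl0 : HasBoundaryIn K.topSub (singleFaces b n (K.d n 0 w)) :=
      (hasBoundaryIn_singleFaces_iff_zero hT hbT hl (Set.mem_univ _) n (by omega)).2
        ⟨w, Set.mem_univ w, fun i hi => hw.d_eq_singleFaces hi⟩
    rw [← pairFaces_basept] at hl0
    refine (hasBoundaryIn_singleFaces_iff_zero hT hbT hx (Set.mem_univ x) n (by omega)).1 ?_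
    rw [← pairFaces_basept]
    exact (hl0.euclidean hT hbT ((homotopicIn_iff hl).1 hlx).topSub).symm hT hbT
      (basept_isSph' b n) (Set.mem_univ _)

lemma isSph_of_hasBoundaryIn_relFaces {M : Subcomplex K} {m : ℕ} {h x : K.obj (m + 1)}
    (hx : K.IsSph b x) (hu : HasBoundaryIn M (relFaces b h x (K.basept b (m + 1)))) :
    K.IsSph b h := by
  obtain ⟨u, -, hu⟩ := hu
  have hu0 : K.d (m + 1) 0 u = h := hu 0 (by omega)
  rw [← hu0]
  refine isSph_d_of_isSph (by omega) fun j hj hj0 => ?_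
  rw [hu j hj]
  unfold relFaces
  split_ifs <;> first | omega | exact hx | exact K.basept_isSph b m

lemma exists_hasBoundaryIn_relFaces_of_fst {L : Subcomplex K} (hL : L.IsKan)
    (hb : b ∈ L.mem 0) {m : ℕ} {h : K.obj (m + 1)} (hhL : h ∈ L.mem (m + 1))
    (hh : K.IsSph b h) : ∃ l ∈ L.mem (m + 1), K.IsSph b l ∧
      HasBoundaryIn L (relFaces b h l (K.basept b (m + 1))) := by
  obtain ⟨V, hVL, hV, hl⟩ := hL.exists_of_isSph (k := m + 1) (by omega)
    (relFaces b h (K.basept b (m + 1)) (K.basept b (m + 1))) fun j _ _ => by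
      unfold relFaces
      split_ifs <;> first | exact ⟨hhL, hh⟩ | exact ⟨L.basept_mem hb _, K.basept_isSph b m⟩
  refine ⟨K.d (m + 1) (m + 1) V, L.d_mem _ _ (by omega) V hVL, hl, V, hVL, fun j hj => ?_⟩
  by_cases hjm : j = m + 1
  · simp [hjm, relFaces]
  · rw [hV j hj hjm]; simp [relFaces, hjm]

lemma exists_hasBoundaryIn_relFaces_of_snd {L : Subcomplex K} (hL : L.IsKan)
    (hb : b ∈ L.mem 0) {m : ℕ} {l : K.obj (m + 1)} (hlL : l ∈ L.mem (m + 1))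
    (hl : K.IsSph b l) : ∃ h ∈ L.mem (m + 1), K.IsSph b h ∧
      HasBoundaryIn L (relFaces b h l (K.basept b (m + 1))) := by
  obtain ⟨V, hVL, hV, hh⟩ := hL.exists_of_isSph (k := 0) (by omega)
    (relFaces b (K.basept b (m + 1)) l (K.basept b (m + 1))) fun j _ _ => by
      unfold relFaces
      split_ifs <;>
        first | omega | exact ⟨hlL, hl⟩ | exact ⟨L.basept_mem hb _, K.basept_isSph b m⟩
  refine ⟨K.d (m + 1) 0 V, L.d_mem _ _ (by omega) V hVL, hh, V, hVL, fun j hj => ?_⟩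
  by_cases hj0 : j = 0
  · simp [hj0, relFaces]
  · rw [hV j hj hj0]; simp [relFaces, hj0]

theorem homotopicRel_basept_iff (hK : K.IsKan) {L : Subcomplex K} (hL : L.IsKan)
    (hb : b ∈ L.mem 0) {m : ℕ} {x : K.obj (m + 1)} (hx : K.IsSph b x) :
    K.HomotopicRel L x (K.basept b (m + 1)) ↔
      ∃ l ∈ L.mem (m + 1), K.IsSph b l ∧ K.Homotopic l x := by
  rw [homotopicRel_iff hb hx (isRelSph_basept L hb m)]
  constructor
  · rintro ⟨h, hhL, hu⟩
    have hh := isSph_of_hasBoundaryIn_relFaces hx hu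
    obtain ⟨l, hlL, hl, hV⟩ := exists_hasBoundaryIn_relFaces_of_fst hL hb hhL hh
    refine ⟨l, hlL, hl, ?_⟩
    rw [homotopic_iff_homotopicIn_topSub, homotopicIn_iff (n := m + 1) hl]
    exact (hasBoundaryIn_pairFaces_iff_relFaces hK hh hV.topSub).2 hu
  · rintro ⟨l, hlL, hl, hlx⟩
    obtain ⟨h, hhL, hh, hV⟩ := exists_hasBoundaryIn_relFaces_of_snd hL hb hlL hl
    rw [homotopic_iff_homotopicIn_topSub, homotopicIn_iff (n := m + 1) hl] at hlx
    exact ⟨h, hhL, (hasBoundaryIn_pairFaces_iff_relFaces hK hh hV.topSub).1 hlx⟩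

end SSetC

open SSetC in
/-- The natural homotopy sequence of a pointed pair `(K, L, ⋆)` of
Kan complexes
`… → π_{n+1}(K,L) --∂--> π_n(L) --i_*--> π_n(K) --p_*--> π_n(K,L) → …
   → π_1(K,L) --∂--> π_0(L) --i_*--> π_0(K)`
is exact, stated on representatives:
* exactness at `π_n(K, L, ⋆)` (`n = m+1 ≥ 1`): the class of a relative spherical
  simplex `w` is sent to the trivial element by `∂_*[w] = [d_0 w]` iff it is in
  the image of `p_*`;
* exactness at `π_n(L, ⋆)` (all `n ≥ 0`, in the group sense for `n ≥ 1` and the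
  pointed-set sense for `n = 0`): `i_*[x] = [⋆]` iff `[x]` is in the image of `∂_*`;
* exactness at `π_n(K, ⋆)` (`n = m+1 ≥ 1`): `p_*[x] = [⋆]` iff `[x]` is in the
  image of `i_*`. -/
theorem exact_sequence_of_pair (K : SSetC) (hK : K.IsKan)
    (L : Subcomplex K) (hL : L.IsKan) (b : K.obj 0) (hb : b ∈ L.mem 0) :
    (∀ (m : ℕ) (w : K.obj (m + 1)), K.IsRelSph L b w →
      (K.HomotopicIn L (K.d m 0 w) (K.basept b m) ↔
        ∃ x : K.obj (m + 1), K.IsSph b x ∧ K.HomotopicRel L x w)) ∧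
    (∀ (n : ℕ) (x : K.obj n), x ∈ L.mem n → K.IsSph' b x →
      (K.Homotopic x (K.basept b n) ↔
        ∃ w : K.obj (n + 1), K.IsRelSph L b w ∧ K.HomotopicIn L (K.d n 0 w) x)) ∧
    (∀ (m : ℕ) (x : K.obj (m + 1)), K.IsSph b x →
      (K.HomotopicRel L x (K.basept b (m + 1)) ↔
        ∃ l : K.obj (m + 1), l ∈ L.mem (m + 1) ∧ K.IsSph b l ∧ K.Homotopic l x)) :=
  ⟨fun _ _ hw => homotopicIn_d_zero_basept_iff hK hL hb hw,
    fun _ _ hxL hx => homotopic_basept_iff hK hxL hx,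
    fun _ _ hx => homotopicRel_basept_iff hK hL hb hx⟩
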